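/- Let n ≥ 1 and consider the square quiver with dimension vector (n₁, n₂, n₃, n₄) = (n, n, n+1, n+1). A weight σ = (σ₁, σ₂, σ₃, σ₄) ∈ ℤ⁴ admits a nonzero semi-invariant polynomial if and only if σ₁ + σ₂ ≥ 0, σ₁ + σ₃ + σ₄ ≥ 0, σ₃ ≥ 0, and n σ₁ + n σ₂ + (n+1) σ₃ + (n+1) σ₄ = 0. -/

import Mathlib

/-- Variables: entries of the four matrices attached to the arrows
`1 → 2`, `1 → 3`, `2 → 4`, `3 → 4` of the square quiver. -/
abbrev SqVars (n₁ n₂ n₃ n₄ : ℕ) :=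
  (Fin n₂ × Fin n₁) ⊕ (Fin n₃ × Fin n₁) ⊕ (Fin n₄ × Fin n₂) ⊕ (Fin n₄ × Fin n₃)

/-- Evaluate a polynomial in the matrix entries at a representation `(v₁, v₂, v₃, v₄)`. -/
noncomputable def sqEval {n₁ n₂ n₃ n₄ : ℕ} (f : MvPolynomial (SqVars n₁ n₂ n₃ n₄) ℂ)
    (v₁ : Matrix (Fin n₂) (Fin n₁) ℂ) (v₂ : Matrix (Fin n₃) (Fin n₁) ℂ)
    (v₃ : Matrix (Fin n₄) (Fin n₂) ℂ) (v₄ : Matrix (Fin n₄) (Fin n₃) ℂ) : ℂ :=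
  MvPolynomial.eval
    (Sum.elim (fun p => v₁ p.1 p.2) <| Sum.elim (fun p => v₂ p.1 p.2) <|
      Sum.elim (fun p => v₃ p.1 p.2) (fun p => v₄ p.1 p.2)) f

/-- `f` is a semi-invariant of weight `(σ₁, σ₂, σ₃, σ₄)` for the square quiver. -/
def IsSqSemiInvariant {n₁ n₂ n₃ n₄ : ℕ} (σ₁ σ₂ σ₃ σ₄ : ℤ)
    (f : MvPolynomial (SqVars n₁ n₂ n₃ n₄) ℂ) : Prop :=
  ∀ (g₁ : (Matrix (Fin n₁) (Fin n₁) ℂ)ˣ) (g₂ : (Matrix (Fin n₂) (Fin n₂) ℂ)ˣ)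
    (g₃ : (Matrix (Fin n₃) (Fin n₃) ℂ)ˣ) (g₄ : (Matrix (Fin n₄) (Fin n₄) ℂ)ˣ)
    (v₁ : Matrix (Fin n₂) (Fin n₁) ℂ) (v₂ : Matrix (Fin n₃) (Fin n₁) ℂ)
    (v₃ : Matrix (Fin n₄) (Fin n₂) ℂ) (v₄ : Matrix (Fin n₄) (Fin n₃) ℂ),
    sqEval f
        ((g₂ : Matrix (Fin n₂) (Fin n₂) ℂ) * v₁ * (g₁⁻¹ : Matrix (Fin n₁) (Fin n₁) ℂ))
        ((g₃ : Matrix (Fin n₃) (Fin n₃) ℂ) * v₂ * (g₁⁻¹ : Matrix (Fin n₁) (Fin n₁) ℂ))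
        ((g₄ : Matrix (Fin n₄) (Fin n₄) ℂ) * v₃ * (g₂⁻¹ : Matrix (Fin n₂) (Fin n₂) ℂ))
        ((g₄ : Matrix (Fin n₄) (Fin n₄) ℂ) * v₄ * (g₃⁻¹ : Matrix (Fin n₃) (Fin n₃) ℂ))
      = (g₁ : Matrix (Fin n₁) (Fin n₁) ℂ).det ^ (-σ₁)
        * (g₂ : Matrix (Fin n₂) (Fin n₂) ℂ).det ^ (-σ₂)
        * (g₃ : Matrix (Fin n₃) (Fin n₃) ℂ).det ^ (-σ₃)
        * (g₄ : Matrix (Fin n₄) (Fin n₄) ℂ).det ^ (-σ₄)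
        * sqEval f v₁ v₂ v₃ v₄


/-!
A semi-invariant vanishes at `v` as soon as it vanishes at some `g • v`. If a one-parameter subgroup
`λ(t) = (diag (t ^ e₁), …, diag (t ^ e₄))` moves a representation `v` along a curve with a limit at
`t = 0`, then `f (λ(t) • v) = t ^ (-N) f v` with `N = ∑ σₓ ∑ eₓ`, and continuity at `0` forces
`f v = 0` as soon as `N > 0`. Scalars (`e = ±1`) give `∑ nₓ σₓ = 0`; after moving `v` into a normal
form built from left kernels of `v₂`, `v₁` and `v₃` (they exist by counting dimensions), suitable
`λ` give `σ₃ ≥ 0`, `σ₁ + σ₂ ≥ 0` and `σ₁ + σ₃ + σ₄ ≥ 0`.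

Conversely `det v₄`, `det v₁` and the determinant of the block matrix
`[v₃ v₄v₂ 0 ⋯; 0 v₃v₁ v₄v₂ ⋯; ⋯]` are semi-invariants of weights `(0, 0, 1, -1)`,
`(1, -1, 0, 0)` and `(n, 1, 0, -n)`, and every weight satisfying the conditions is a combination
of these with coefficients in `ℕ`. The block determinant does not vanish when `v₂` and `v₃` are the
two coordinate embeddings `ℂⁿ → ℂⁿ⁺¹`: reading the blocks of a kernel vector as polynomials `xᵢ` of
degree `< n`, the kernel equations say `xᵢ₊₁ = -z xᵢ`, so `x₀ zⁿ` has degree `< n`.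
-/

open MvPolynomial Filter Topology
open scoped Matrix

namespace Matrix

variable {K : Type*} [Field K] {m n o p : Type*}

section LinearAlgebra

variable [Fintype m]

theorem exists_ne_zero_forall_vecMul_eq_zero (M : Matrix m n K) (S : Finset n)
    (h : S.card < Fintype.card m) : ∃ u ≠ 0, ∀ j ∈ S, (u ᵥ* M) j = 0 := by
  obtain ⟨u, hu, hu0⟩ := (Submodule.ne_bot_iff _).mp <| LinearMap.ker_ne_bot_of_finrank_lt
    (f := LinearMap.funLeft K K ((↑) : S → n) ∘ₗ M.vecMulLinear) (by simpa using h)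
  exact ⟨u, hu0, fun j hj => congr_fun hu ⟨j, hj⟩⟩

variable [DecidableEq m]

theorem det_one_updateRow (k : m) (w : m → K) : ((1 : Matrix m m K).updateRow k w).det = w k := by
  rw [← cramer_transpose_apply, transpose_one, cramer_one]
  rfl

theorem exists_units_row_eq {w : m → K} (hw : w ≠ 0) :
    ∃ (g : (Matrix m m K)ˣ) (k : m), (g : Matrix m m K) k = w := by
  obtain ⟨k, hk⟩ := Function.ne_iff.mp hw
  have hdet : IsUnit ((1 : Matrix m m K).updateRow k w).det := by
    rw [det_one_updateRow]
    exact hk.isUnit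
  exact ⟨((isUnit_iff_isUnit_det _).mpr hdet).unit, k, updateRow_self⟩

theorem exists_units_forall_ne_vecMul_inv_eq_zero [Nonempty m] (w : m → K) :
    ∃ (g : (Matrix m m K)ˣ) (k : m), ∀ j ≠ k, (w ᵥ* (g : Matrix m m K)⁻¹) j = 0 := by
  by_cases hw : w = 0
  · exact ⟨1, Classical.arbitrary m, fun j _ => by simp [hw]⟩
  obtain ⟨g, k, hgk⟩ := exists_units_row_eq hw
  refine ⟨g, k, fun j hj => ?_⟩
  rw [← hgk, ← mul_apply_eq_vecMul, ← coe_units_inv, Units.mul_inv, one_apply_ne' hj]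

theorem det_inv_eq_inv_det (A : Matrix m m K) : A⁻¹.det = A.det⁻¹ := by
  rw [det_nonsing_inv, Ring.inverse_eq_inv']

theorem det_units_ne_zero (g : (Matrix m m K)ˣ) : (g : Matrix m m K).det ≠ 0 :=
  ((isUnit_iff_isUnit_det _).mp g.isUnit).ne_zero

def diagonalUnits (d : m → Kˣ) : (Matrix m m K)ˣ where
  val := diagonal fun i => (d i : K)
  inv := diagonal fun i => (((d i)⁻¹ : Kˣ) : K)
  val_inv := by simp [diagonal_mul_diagonal]
  inv_val := by simp [diagonal_mul_diagonal]

@[simp] theorem coe_diagonalUnits (d : m → Kˣ) :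
    (diagonalUnits d : Matrix m m K) = diagonal fun i => (d i : K) :=
  rfl

@[simp] theorem coe_diagonalUnits_inv (d : m → Kˣ) :
    (((diagonalUnits d)⁻¹ : (Matrix m m K)ˣ) : Matrix m m K)
      = diagonal fun i => (((d i)⁻¹ : Kˣ) : K) :=
  rfl

theorem det_diagonalUnits_zpow (t : Kˣ) (e : m → ℤ) :
    (diagonalUnits (fun i => t ^ e i) : Matrix m m K).det = ((t ^ (∑ i, e i) : Kˣ) : K) := by
  rw [coe_diagonalUnits, det_diagonal]
  induction (Finset.univ : Finset m) using Finset.induction_on with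
  | empty => simp
  | insert a s ha ih =>
    rw [Finset.prod_insert ha, Finset.sum_insert ha, _root_.zpow_add, Units.val_mul, ih]

end LinearAlgebra

section Weights

/-- `diag (t ^ r) * M * diag (t ^ c)⁻¹` has a limit as `t → 0`. -/
def HasNonnegWeights (r : m → ℤ) (c : n → ℤ) (M : Matrix m n K) : Prop :=
  ∀ i j, r i < c j → M i j = 0

def weightedScale (r : m → ℤ) (c : n → ℤ) (M : Matrix m n K) (s : K) : Matrix m n K :=
  of fun i j => s ^ (r i - c j).toNat * M i j

theorem HasNonnegWeights.diagonalUnits_mul_mul_inv [Fintype m] [Fintype n] [DecidableEq m]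
    [DecidableEq n] {r : m → ℤ} {c : n → ℤ} {M : Matrix m n K} (hM : HasNonnegWeights r c M)
    (t : Kˣ) :
    (diagonalUnits (fun i => t ^ r i) : Matrix m m K) * M
        * (diagonalUnits (fun j => t ^ c j) : Matrix n n K)⁻¹
      = weightedScale r c M t := by
  rw [← coe_units_inv]
  ext i j
  rw [coe_diagonalUnits, coe_diagonalUnits_inv, mul_diagonal, diagonal_mul, weightedScale,
    of_apply]
  rcases lt_or_ge (r i) (c j) with h | h
  · simp [hM i j h]
  · obtain ⟨k, hk⟩ := Int.eq_ofNat_of_zero_le (sub_nonneg.mpr h)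
    rw [mul_right_comm, ← Units.val_mul, ← _root_.zpow_neg, ← _root_.zpow_add, ← sub_eq_add_neg,
      hk, zpow_natCast, Units.val_pow_eq_pow_val, Int.toNat_natCast]

theorem continuous_weightedScale [TopologicalSpace K] [IsTopologicalRing K] (r : m → ℤ)
    (c : n → ℤ) (M : Matrix m n K) : Continuous (weightedScale r c M) :=
  continuous_matrix fun _ _ => by unfold weightedScale; fun_prop

theorem hasNonnegWeights_of_le {r : m → ℤ} {c : n → ℤ} (h : ∀ i j, c j ≤ r i)
    (M : Matrix m n K) : HasNonnegWeights r c M :=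
  fun i j hij => absurd (h i j) (not_le.mpr hij)

theorem hasNonnegWeights_zero_neg_single [DecidableEq n] (l : n) (M : Matrix m n K) :
    HasNonnegWeights 0 (-Pi.single l 1) M :=
  hasNonnegWeights_of_le (fun _ j => by by_cases hj : j = l <;> simp [hj]) M

theorem hasNonnegWeights_neg_single_zero [DecidableEq m] {M : Matrix m n K} {k : m}
    (h : ∀ j, M k j = 0) : HasNonnegWeights (-Pi.single k 1) 0 M := by
  intro i j hij
  by_cases hi : i = k
  · exact hi ▸ h j
  · simp [hi] at hij

theorem hasNonnegWeights_neg_single [DecidableEq m] [DecidableEq n] {M : Matrix m n K} {k : m}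
    {l : n} (h : ∀ j ≠ l, M k j = 0) : HasNonnegWeights (-Pi.single k 1) (-Pi.single l 1) M := by
  intro i j hij
  by_cases hi : i = k <;> by_cases hj : j = l
  · simp [hi, hj] at hij
  · exact hi ▸ h j hj
  all_goals simp [hi, hj] at hij

end Weights

section Blocks

variable {α : Type*}

def ofBlocks (B : o → p → Matrix m n α) : Matrix (m × o) (n × p) α :=
  of fun x y => B x.2 y.2 x.1 y.1

variable [CommRing α] [Fintype m] [Fintype n] [Fintype o] [Fintype p] [DecidableEq o]
  [DecidableEq p]

theorem blockDiagonal_mul_ofBlocks_mul_blockDiagonal (P : o → Matrix m m α)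
    (B : o → p → Matrix m n α) (Q : p → Matrix n n α) :
    blockDiagonal P * ofBlocks B * blockDiagonal Q = ofBlocks fun i j => P i * B i j * Q j := by
  ext ⟨r, i⟩ ⟨c, j⟩
  simp [ofBlocks, mul_apply, blockDiagonal_apply, Fintype.sum_prod_type]

theorem det_submatrix_blockDiagonal_mul_mul_blockDiagonal [DecidableEq m] [DecidableEq n]
    (P : o → Matrix m m α) (M : Matrix (m × o) (n × p) α) (Q : p → Matrix n n α)
    (e : m × o ≃ n × p) :
    ((blockDiagonal P * M * blockDiagonal Q).submatrix id e).det
      = (∏ i, (P i).det) * (M.submatrix id e).det * ∏ j, (Q j).det := by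
  rw [← submatrix_mul_equiv _ _ id e e, det_mul, det_submatrix_equiv_self, det_blockDiagonal,
    show (blockDiagonal P * M).submatrix id e = blockDiagonal P * M.submatrix id e from rfl,
    det_mul, det_blockDiagonal]

end Blocks

end Matrix

theorem eq_zero_of_continuousAt_of_eq_zpow_mul {𝕜 : Type*} [NontriviallyNormedField 𝕜]
    {φ : 𝕜 → 𝕜} (hφ : ContinuousAt φ 0) {N : ℤ} (hN : 0 < N) {a : 𝕜}
    (h : ∀ t ≠ 0, φ t = t ^ (-N) * a) : a = 0 := by
  lift N to ℕ using hN.le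
  have hlim : Tendsto (fun t => t ^ N * φ t) (𝓝[≠] 0) (𝓝 0) := by
    have : ContinuousAt (fun t => t ^ N * φ t) 0 := (continuousAt_id.pow N).mul hφ
    simpa [zero_pow (Nat.cast_pos.mp hN).ne'] using this.tendsto.mono_left nhdsWithin_le_nhds
  refine tendsto_nhds_unique (tendsto_const_nhds.congr' ?_) hlim
  filter_upwards [self_mem_nhdsWithin] with t ht
  rw [h t ht, zpow_neg, zpow_natCast, mul_inv_cancel_left₀ (pow_ne_zero _ ht)]

theorem eq_zero_of_shift_relations {M : Type*} [AddGroup M] {n : ℕ} {y : ℕ → ℕ → M}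
    (hy : ∀ j c, n ≤ c → y j c = 0) (h₀ : ∀ i < n, y (i + 1) 0 = 0)
    (h : ∀ i < n, ∀ c < n, y i c + y (i + 1) (c + 1) = 0) : ∀ j ≤ n, ∀ c, y j c = 0 := by
  have above (k : ℕ) : ∀ j c, n - c = k → j ≤ c → y j c = 0 := by
    induction k with
    | zero => exact fun j c hk _ => hy j c (by omega)
    | succ k ih =>
      intro j c hk hjc
      have := h j (by omega) c (by omega)
      rwa [ih (j + 1) (c + 1) (by omega) (by omega), add_zero] at this
  have below (c : ℕ) : ∀ j, c < j → j ≤ n → y j c = 0 := by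
    induction c with
    | zero => exact fun j hj hjn => by simpa [Nat.sub_add_cancel hj] using h₀ (j - 1) (by omega)
    | succ c ih =>
      intro j hcj hjn
      have := h (j - 1) (by omega) c (by omega)
      rwa [ih (j - 1) (by omega) (by omega), zero_add, Nat.sub_add_cancel (by omega)] at this
  intro j hj c
  rcases le_or_gt j c with hjc | hcj
  exacts [above _ j c rfl hjc, below c j hcj hj]

section SquareQuiver

variable {n₁ n₂ n₃ n₄ : ℕ}

def sqPoint (v₁ : Matrix (Fin n₂) (Fin n₁) ℂ) (v₂ : Matrix (Fin n₃) (Fin n₁) ℂ)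
    (v₃ : Matrix (Fin n₄) (Fin n₂) ℂ) (v₄ : Matrix (Fin n₄) (Fin n₃) ℂ) :
    SqVars n₁ n₂ n₃ n₄ → ℂ :=
  Sum.elim (fun p => v₁ p.1 p.2) <| Sum.elim (fun p => v₂ p.1 p.2) <|
    Sum.elim (fun p => v₃ p.1 p.2) (fun p => v₄ p.1 p.2)

section Evaluation

variable (f g : MvPolynomial (SqVars n₁ n₂ n₃ n₄) ℂ)
  (v₁ : Matrix (Fin n₂) (Fin n₁) ℂ) (v₂ : Matrix (Fin n₃) (Fin n₁) ℂ)
  (v₃ : Matrix (Fin n₄) (Fin n₂) ℂ) (v₄ : Matrix (Fin n₄) (Fin n₃) ℂ)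

theorem sqEval_eq_eval : sqEval f v₁ v₂ v₃ v₄ = eval (sqPoint v₁ v₂ v₃ v₄) f :=
  rfl

theorem sqEval_mul :
    sqEval (f * g) v₁ v₂ v₃ v₄ = sqEval f v₁ v₂ v₃ v₄ * sqEval g v₁ v₂ v₃ v₄ :=
  map_mul _ f g

theorem sqEval_pow (k : ℕ) : sqEval (f ^ k) v₁ v₂ v₃ v₄ = sqEval f v₁ v₂ v₃ v₄ ^ k :=
  map_pow _ f k

theorem sqEval_det {ι : Type*} [Fintype ι] [DecidableEq ι]
    (M : Matrix ι ι (MvPolynomial (SqVars n₁ n₂ n₃ n₄) ℂ)) :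
    sqEval M.det v₁ v₂ v₃ v₄ = (M.map (eval (sqPoint v₁ v₂ v₃ v₄))).det :=
  RingHom.map_det _ M

theorem continuous_sqEval {X : Type*} [TopologicalSpace X] {W₁ : X → Matrix (Fin n₂) (Fin n₁) ℂ}
    {W₂ : X → Matrix (Fin n₃) (Fin n₁) ℂ} {W₃ : X → Matrix (Fin n₄) (Fin n₂) ℂ}
    {W₄ : X → Matrix (Fin n₄) (Fin n₃) ℂ} (h₁ : Continuous W₁) (h₂ : Continuous W₂)
    (h₃ : Continuous W₃) (h₄ : Continuous W₄) :
    Continuous fun x => sqEval f (W₁ x) (W₂ x) (W₃ x) (W₄ x) := by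
  refine (continuous_eval f).comp (continuous_pi fun s => ?_)
  rcases s with ⟨p, q⟩ | ⟨p, q⟩ | ⟨p, q⟩ | ⟨p, q⟩
  exacts [h₁.matrix_elem p q, h₂.matrix_elem p q, h₃.matrix_elem p q, h₄.matrix_elem p q]

variable {f v₁ v₂ v₃ v₄}

theorem ne_zero_of_sqEval_ne_zero (h : sqEval f v₁ v₂ v₃ v₄ ≠ 0) : f ≠ 0 := by
  rintro rfl
  simp [sqEval_eq_eval] at h

theorem eq_zero_of_forall_sqEval_eq_zero (h : ∀ v₁ v₂ v₃ v₄, sqEval f v₁ v₂ v₃ v₄ = 0) :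
    f = 0 := by
  refine MvPolynomial.funext fun x => ?_
  have hx : sqPoint (Matrix.of fun p q => x (.inl (p, q)))
      (Matrix.of fun p q => x (.inr (.inl (p, q))))
      (Matrix.of fun p q => x (.inr (.inr (.inl (p, q)))))
      (Matrix.of fun p q => x (.inr (.inr (.inr (p, q))))) = x := by
    funext s
    rcases s with ⟨p, q⟩ | ⟨p, q⟩ | ⟨p, q⟩ | ⟨p, q⟩ <;> rfl
  rw [map_zero, ← hx, ← sqEval_eq_eval, h]

end Evaluation

variable {σ₁ σ₂ σ₃ σ₄ τ₁ τ₂ τ₃ τ₄ : ℤ} {f g : MvPolynomial (SqVars n₁ n₂ n₃ n₄) ℂ}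

theorem isSqSemiInvariant_one :
    IsSqSemiInvariant 0 0 0 0 (1 : MvPolynomial (SqVars n₁ n₂ n₃ n₄) ℂ) := by
  intro _ _ _ _ _ _ _ _
  simp [sqEval_eq_eval]

theorem IsSqSemiInvariant.mul (hf : IsSqSemiInvariant σ₁ σ₂ σ₃ σ₄ f)
    (hg : IsSqSemiInvariant τ₁ τ₂ τ₃ τ₄ g) :
    IsSqSemiInvariant (σ₁ + τ₁) (σ₂ + τ₂) (σ₃ + τ₃) (σ₄ + τ₄) (f * g) := by
  intro g₁ g₂ g₃ g₄ v₁ v₂ v₃ v₄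
  rw [sqEval_mul, sqEval_mul, hf, hg]
  simp only [neg_add, zpow_add₀ (Matrix.det_units_ne_zero g₁),
    zpow_add₀ (Matrix.det_units_ne_zero g₂), zpow_add₀ (Matrix.det_units_ne_zero g₃),
    zpow_add₀ (Matrix.det_units_ne_zero g₄)]
  ring

theorem IsSqSemiInvariant.pow (hf : IsSqSemiInvariant σ₁ σ₂ σ₃ σ₄ f) (k : ℕ) :
    IsSqSemiInvariant (k * σ₁) (k * σ₂) (k * σ₃) (k * σ₄) (f ^ k) := by
  induction k with
  | zero => simpa using isSqSemiInvariant_one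
  | succ k ih =>
    rw [pow_succ]
    convert ih.mul hf using 1 <;> push_cast <;> ring

theorem IsSqSemiInvariant.sqEval_eq_zero_of_sqEval_act_eq_zero
    (hf : IsSqSemiInvariant σ₁ σ₂ σ₃ σ₄ f)
    (g₁ : (Matrix (Fin n₁) (Fin n₁) ℂ)ˣ) (g₂ : (Matrix (Fin n₂) (Fin n₂) ℂ)ˣ)
    (g₃ : (Matrix (Fin n₃) (Fin n₃) ℂ)ˣ) (g₄ : (Matrix (Fin n₄) (Fin n₄) ℂ)ˣ)
    {v₁ : Matrix (Fin n₂) (Fin n₁) ℂ} {v₂ : Matrix (Fin n₃) (Fin n₁) ℂ}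
    {v₃ : Matrix (Fin n₄) (Fin n₂) ℂ} {v₄ : Matrix (Fin n₄) (Fin n₃) ℂ}
    (h : sqEval f ((g₂ : Matrix (Fin n₂) (Fin n₂) ℂ) * v₁ * (g₁ : Matrix (Fin n₁) (Fin n₁) ℂ)⁻¹)
      ((g₃ : Matrix (Fin n₃) (Fin n₃) ℂ) * v₂ * (g₁ : Matrix (Fin n₁) (Fin n₁) ℂ)⁻¹)
      ((g₄ : Matrix (Fin n₄) (Fin n₄) ℂ) * v₃ * (g₂ : Matrix (Fin n₂) (Fin n₂) ℂ)⁻¹)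
      ((g₄ : Matrix (Fin n₄) (Fin n₄) ℂ) * v₄ * (g₃ : Matrix (Fin n₃) (Fin n₃) ℂ)⁻¹) = 0) :
    sqEval f v₁ v₂ v₃ v₄ = 0 := by
  rw [hf] at h
  refine (mul_eq_zero.mp h).resolve_left ?_
  simp [zpow_ne_zero, Matrix.det_units_ne_zero]

theorem IsSqSemiInvariant.sqEval_eq_zero_of_weight_pos (hf : IsSqSemiInvariant σ₁ σ₂ σ₃ σ₄ f)
    (e₁ : Fin n₁ → ℤ) (e₂ : Fin n₂ → ℤ) (e₃ : Fin n₃ → ℤ) (e₄ : Fin n₄ → ℤ)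
    {v₁ : Matrix (Fin n₂) (Fin n₁) ℂ} {v₂ : Matrix (Fin n₃) (Fin n₁) ℂ}
    {v₃ : Matrix (Fin n₄) (Fin n₂) ℂ} {v₄ : Matrix (Fin n₄) (Fin n₃) ℂ}
    (h₁ : v₁.HasNonnegWeights e₂ e₁) (h₂ : v₂.HasNonnegWeights e₃ e₁)
    (h₃ : v₃.HasNonnegWeights e₄ e₂) (h₄ : v₄.HasNonnegWeights e₄ e₃)
    (hpos : 0 < σ₁ * ∑ i, e₁ i + σ₂ * ∑ i, e₂ i + σ₃ * ∑ i, e₃ i + σ₄ * ∑ i, e₄ i) :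
    sqEval f v₁ v₂ v₃ v₄ = 0 := by
  refine eq_zero_of_continuousAt_of_eq_zpow_mul (continuous_sqEval f
    (Matrix.continuous_weightedScale e₂ e₁ v₁) (Matrix.continuous_weightedScale e₃ e₁ v₂)
    (Matrix.continuous_weightedScale e₄ e₂ v₃)
    (Matrix.continuous_weightedScale e₄ e₃ v₄)).continuousAt hpos fun t ht => ?_
  let torus {k : ℕ} (e : Fin k → ℤ) := Matrix.diagonalUnits fun i => Units.mk0 t ht ^ e i
  have := hf (torus e₁) (torus e₂) (torus e₃) (torus e₄) v₁ v₂ v₃ v₄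
  rw [h₁.diagonalUnits_mul_mul_inv, h₂.diagonalUnits_mul_mul_inv, h₃.diagonalUnits_mul_mul_inv,
    h₄.diagonalUnits_mul_mul_inv] at this
  simp only [torus, Matrix.det_diagonalUnits_zpow, Units.val_mk0] at this
  rw [this]
  congr 1
  simp only [← Units.val_zpow_eq_zpow_val, ← Units.val_mul, ← zpow_mul, ← zpow_add]
  rw [Units.val_zpow_eq_zpow_val, Units.val_mk0]
  ring_nf

theorem IsSqSemiInvariant.sum_dim_mul_weight_eq_zero (hf : IsSqSemiInvariant σ₁ σ₂ σ₃ σ₄ f)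
    (hf0 : f ≠ 0) : (n₁ : ℤ) * σ₁ + n₂ * σ₂ + n₃ * σ₃ + n₄ * σ₄ = 0 := by
  by_contra hne
  refine hf0 (eq_zero_of_forall_sqEval_eq_zero fun v₁ v₂ v₃ v₄ => ?_)
  -- scalar matrices act trivially on representations
  obtain ⟨e, he⟩ : ∃ e : ℤ, 0 < e * ((n₁ : ℤ) * σ₁ + n₂ * σ₂ + n₃ * σ₃ + n₄ * σ₄) := by
    rcases lt_or_gt_of_ne hne with h | h
    exacts [⟨-1, by linarith⟩, ⟨1, by linarith⟩]
  have hc {a b : ℕ} (M : Matrix (Fin a) (Fin b) ℂ) :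
      M.HasNonnegWeights (fun _ => e) (fun _ => e) :=
    Matrix.hasNonnegWeights_of_le (fun _ _ => le_rfl) M
  refine hf.sqEval_eq_zero_of_weight_pos _ _ _ _ (hc v₁) (hc v₂) (hc v₃) (hc v₄) ?_
  simp only [Finset.sum_const, Finset.card_univ, Fintype.card_fin, nsmul_eq_mul]
  linarith

theorem IsSqSemiInvariant.σ₃_nonneg (hf : IsSqSemiInvariant σ₁ σ₂ σ₃ σ₄ f) (hf0 : f ≠ 0)
    (h : n₁ < n₃) : 0 ≤ σ₃ := by
  by_contra! hneg
  refine hf0 (eq_zero_of_forall_sqEval_eq_zero fun v₁ v₂ v₃ v₄ => ?_)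
  obtain ⟨u, hu0, hu⟩ := v₂.exists_ne_zero_forall_vecMul_eq_zero Finset.univ (by simpa using h)
  obtain ⟨g, k, hgk⟩ := Matrix.exists_units_row_eq hu0
  refine hf.sqEval_eq_zero_of_sqEval_act_eq_zero 1 1 g 1 <|
    hf.sqEval_eq_zero_of_weight_pos 0 0 (-Pi.single k 1) 0
      (Matrix.hasNonnegWeights_of_le (fun _ _ => le_rfl) _)
      (Matrix.hasNonnegWeights_neg_single_zero fun j => ?_)
      (Matrix.hasNonnegWeights_of_le (fun _ _ => le_rfl) _)
      (Matrix.hasNonnegWeights_zero_neg_single k _) (by simpa using hneg)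
  simp only [Units.val_one, inv_one, Matrix.mul_one]
  rw [Matrix.mul_apply_eq_vecMul, hgk, hu j (Finset.mem_univ j)]

theorem IsSqSemiInvariant.σ₁_add_σ₂_nonneg (hf : IsSqSemiInvariant σ₁ σ₂ σ₃ σ₄ f) (hf0 : f ≠ 0)
    (h₁ : 0 < n₁) (h : n₁ ≤ n₂) : 0 ≤ σ₁ + σ₂ := by
  by_contra! hneg
  refine hf0 (eq_zero_of_forall_sqEval_eq_zero fun v₁ v₂ v₃ v₄ => ?_)
  let l : Fin n₁ := ⟨0, h₁⟩
  obtain ⟨u, hu0, hu⟩ := v₁.exists_ne_zero_forall_vecMul_eq_zero (Finset.univ.erase l)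
    (by rw [Finset.card_erase_of_mem (Finset.mem_univ l), Finset.card_univ, Fintype.card_fin,
      Fintype.card_fin]; omega)
  obtain ⟨g, k, hgk⟩ := Matrix.exists_units_row_eq hu0
  refine hf.sqEval_eq_zero_of_sqEval_act_eq_zero 1 g 1 1 <|
    hf.sqEval_eq_zero_of_weight_pos (-Pi.single l 1) (-Pi.single k 1) 0 0
      (Matrix.hasNonnegWeights_neg_single fun j hj => ?_)
      (Matrix.hasNonnegWeights_zero_neg_single l _) (Matrix.hasNonnegWeights_zero_neg_single k _)
      (Matrix.hasNonnegWeights_of_le (fun _ _ => le_rfl) _)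
      (by simp only [Pi.neg_apply, Pi.zero_apply, Finset.sum_neg_distrib, Finset.sum_const_zero,
        Finset.sum_pi_single', Finset.mem_univ, if_true]; linarith)
  simp only [Units.val_one, inv_one, Matrix.mul_one]
  rw [Matrix.mul_apply_eq_vecMul, hgk, hu j (by simpa using hj)]

theorem IsSqSemiInvariant.σ₁_add_σ₃_add_σ₄_nonneg (hf : IsSqSemiInvariant σ₁ σ₂ σ₃ σ₄ f)
    (hf0 : f ≠ 0) (h₁ : 0 < n₁) (h₃ : 0 < n₃) (h : n₂ < n₄) : 0 ≤ σ₁ + σ₃ + σ₄ := by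
  by_contra! hneg
  refine hf0 (eq_zero_of_forall_sqEval_eq_zero fun v₁ v₂ v₃ v₄ => ?_)
  have : Nonempty (Fin n₁) := ⟨⟨0, h₁⟩⟩
  have : Nonempty (Fin n₃) := ⟨⟨0, h₃⟩⟩
  obtain ⟨u, hu0, hu⟩ := v₃.exists_ne_zero_forall_vecMul_eq_zero Finset.univ (by simpa using h)
  obtain ⟨g₄, k₄, hg₄⟩ := Matrix.exists_units_row_eq hu0
  obtain ⟨g₃, k₃, hg₃⟩ := Matrix.exists_units_forall_ne_vecMul_inv_eq_zero (u ᵥ* v₄)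
  obtain ⟨g₁, k₁, hg₁⟩ := Matrix.exists_units_forall_ne_vecMul_inv_eq_zero
    (((g₃ : Matrix (Fin n₃) (Fin n₃) ℂ) * v₂) k₃)
  refine hf.sqEval_eq_zero_of_sqEval_act_eq_zero g₁ 1 g₃ g₄ <|
    hf.sqEval_eq_zero_of_weight_pos (-Pi.single k₁ 1) 0 (-Pi.single k₃ 1) (-Pi.single k₄ 1)
      (Matrix.hasNonnegWeights_zero_neg_single k₁ _)
      (Matrix.hasNonnegWeights_neg_single fun j hj => ?_)
      (Matrix.hasNonnegWeights_neg_single_zero fun j => ?_)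
      (Matrix.hasNonnegWeights_neg_single fun j hj => ?_)
      (by simp only [Pi.neg_apply, Pi.zero_apply, Finset.sum_neg_distrib, Finset.sum_const_zero,
        Finset.sum_pi_single', Finset.mem_univ, if_true]; linarith)
  · rw [Matrix.mul_apply_eq_vecMul, hg₁ j hj]
  · simp only [Units.val_one, inv_one, Matrix.mul_one]
    rw [Matrix.mul_apply_eq_vecMul, hg₄, hu j (Finset.mem_univ j)]
  · simp only [Matrix.mul_apply_eq_vecMul, hg₄]
    exact hg₃ j hj

end SquareQuiver

section GenericRepresentation

variable {n₁ n₂ n₃ n₄ : ℕ}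

noncomputable def sqX₁ : Matrix (Fin n₂) (Fin n₁) (MvPolynomial (SqVars n₁ n₂ n₃ n₄) ℂ) :=
  Matrix.of fun p q => X (.inl (p, q))

noncomputable def sqX₂ : Matrix (Fin n₃) (Fin n₁) (MvPolynomial (SqVars n₁ n₂ n₃ n₄) ℂ) :=
  Matrix.of fun p q => X (.inr (.inl (p, q)))

noncomputable def sqX₃ : Matrix (Fin n₄) (Fin n₂) (MvPolynomial (SqVars n₁ n₂ n₃ n₄) ℂ) :=
  Matrix.of fun p q => X (.inr (.inr (.inl (p, q))))

noncomputable def sqX₄ : Matrix (Fin n₄) (Fin n₃) (MvPolynomial (SqVars n₁ n₂ n₃ n₄) ℂ) :=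
  Matrix.of fun p q => X (.inr (.inr (.inr (p, q))))

variable (v₁ : Matrix (Fin n₂) (Fin n₁) ℂ) (v₂ : Matrix (Fin n₃) (Fin n₁) ℂ)
  (v₃ : Matrix (Fin n₄) (Fin n₂) ℂ) (v₄ : Matrix (Fin n₄) (Fin n₃) ℂ)

@[simp] theorem sqX₁_map_eval : sqX₁.map (eval (sqPoint v₁ v₂ v₃ v₄)) = v₁ := by
  ext; simp [sqX₁, sqPoint]

@[simp] theorem sqX₂_map_eval : sqX₂.map (eval (sqPoint v₁ v₂ v₃ v₄)) = v₂ := by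
  ext; simp [sqX₂, sqPoint]

@[simp] theorem sqX₃_map_eval : sqX₃.map (eval (sqPoint v₁ v₂ v₃ v₄)) = v₃ := by
  ext; simp [sqX₃, sqPoint]

@[simp] theorem sqX₄_map_eval : sqX₄.map (eval (sqPoint v₁ v₂ v₃ v₄)) = v₄ := by
  ext; simp [sqX₄, sqPoint]

end GenericRepresentation

theorem isSqSemiInvariant_det_sqX₁ {n n₃ n₄ : ℕ} :
    IsSqSemiInvariant 1 (-1) 0 0
      (sqX₁ : Matrix (Fin n) (Fin n) (MvPolynomial (SqVars n n n₃ n₄) ℂ)).det := by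
  intro g₁ g₂ g₃ g₄ v₁ v₂ v₃ v₄
  simp only [sqEval_det, sqX₁_map_eval, Matrix.det_mul, Matrix.det_inv_eq_inv_det, zpow_one,
    zpow_neg_one, neg_neg, neg_zero, zpow_zero, mul_one]
  ring

theorem isSqSemiInvariant_det_sqX₄ {n₁ n₂ n : ℕ} :
    IsSqSemiInvariant 0 0 1 (-1)
      (sqX₄ : Matrix (Fin n) (Fin n) (MvPolynomial (SqVars n₁ n₂ n n) ℂ)).det := by
  intro g₁ g₂ g₃ g₄ v₁ v₂ v₃ v₄
  simp only [sqEval_det, sqX₄_map_eval, Matrix.det_mul, Matrix.det_inv_eq_inv_det, zpow_one,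
    zpow_neg_one, neg_neg, neg_zero, zpow_zero, one_mul]
  ring

section BlockMatrix

variable {R : Type*} [CommRing R] {n : ℕ}

def sqBlock (w₁ : Matrix (Fin n) (Fin n) R) (w₂ : Matrix (Fin (n + 1)) (Fin n) R)
    (w₃ : Matrix (Fin (n + 1)) (Fin n) R) (w₄ : Matrix (Fin (n + 1)) (Fin (n + 1)) R)
    (i : Fin n) (j : Fin (n + 1)) : Matrix (Fin (n + 1)) (Fin n) R :=
  if (j : ℕ) = i then (if (j : ℕ) = 0 then w₃ else w₃ * w₁)
  else if (j : ℕ) = i + 1 then w₄ * w₂ else 0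

/-- The `n × (n + 1)` block matrix `[w₃ w₄w₂ 0 ⋯ 0; 0 w₃w₁ w₄w₂ ⋯ 0; ⋯; 0 ⋯ 0 w₃w₁ w₄w₂]` with
blocks of size `(n + 1) × n`, its columns reindexed to make it square. -/
def sqBlockMatrix (w₁ : Matrix (Fin n) (Fin n) R) (w₂ : Matrix (Fin (n + 1)) (Fin n) R)
    (w₃ : Matrix (Fin (n + 1)) (Fin n) R) (w₄ : Matrix (Fin (n + 1)) (Fin (n + 1)) R) :
    Matrix (Fin (n + 1) × Fin n) (Fin (n + 1) × Fin n) R :=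
  (Matrix.ofBlocks (sqBlock w₁ w₂ w₃ w₄)).submatrix id (Equiv.prodComm (Fin (n + 1)) (Fin n))

theorem sqBlockMatrix_map {S : Type*} [CommRing S] (φ : R →+* S) (w₁ : Matrix (Fin n) (Fin n) R)
    (w₂ : Matrix (Fin (n + 1)) (Fin n) R) (w₃ : Matrix (Fin (n + 1)) (Fin n) R)
    (w₄ : Matrix (Fin (n + 1)) (Fin (n + 1)) R) :
    (sqBlockMatrix w₁ w₂ w₃ w₄).map φ
      = sqBlockMatrix (w₁.map φ) (w₂.map φ) (w₃.map φ) (w₄.map φ) := by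
  ext ⟨r, i⟩ ⟨j, c⟩
  simp only [sqBlockMatrix, sqBlock, Matrix.ofBlocks, Matrix.map_apply, Matrix.submatrix_apply,
    Matrix.of_apply]
  split_ifs <;> simp [RingHom.map_matrix_mul]

variable {K : Type*} [Field K] (g₁ g₂ : (Matrix (Fin n) (Fin n) K)ˣ)
  (g₃ g₄ : (Matrix (Fin (n + 1)) (Fin (n + 1)) K)ˣ) (w₁ : Matrix (Fin n) (Fin n) K)
  (w₂ : Matrix (Fin (n + 1)) (Fin n) K) (w₃ : Matrix (Fin (n + 1)) (Fin n) K)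
  (w₄ : Matrix (Fin (n + 1)) (Fin (n + 1)) K)

theorem sqBlock_act (i : Fin n) (j : Fin (n + 1)) :
    sqBlock ((g₂ : Matrix (Fin n) (Fin n) K) * w₁ * (g₁ : Matrix (Fin n) (Fin n) K)⁻¹)
        ((g₃ : Matrix (Fin (n + 1)) (Fin (n + 1)) K) * w₂ * (g₁ : Matrix (Fin n) (Fin n) K)⁻¹)
        ((g₄ : Matrix (Fin (n + 1)) (Fin (n + 1)) K) * w₃ * (g₂ : Matrix (Fin n) (Fin n) K)⁻¹)
        ((g₄ : Matrix (Fin (n + 1)) (Fin (n + 1)) K) * w₄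
          * (g₃ : Matrix (Fin (n + 1)) (Fin (n + 1)) K)⁻¹) i j
      = (g₄ : Matrix (Fin (n + 1)) (Fin (n + 1)) K) * sqBlock w₁ w₂ w₃ w₄ i j
        * if (j : ℕ) = 0 then (g₂ : Matrix (Fin n) (Fin n) K)⁻¹
          else (g₁ : Matrix (Fin n) (Fin n) K)⁻¹ := by
  simp only [sqBlock, ← Matrix.coe_units_inv]
  split_ifs <;> first | omega | simp [Matrix.mul_assoc]

theorem det_sqBlockMatrix_act :
    (sqBlockMatrix ((g₂ : Matrix (Fin n) (Fin n) K) * w₁ * (g₁ : Matrix (Fin n) (Fin n) K)⁻¹)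
        ((g₃ : Matrix (Fin (n + 1)) (Fin (n + 1)) K) * w₂ * (g₁ : Matrix (Fin n) (Fin n) K)⁻¹)
        ((g₄ : Matrix (Fin (n + 1)) (Fin (n + 1)) K) * w₃ * (g₂ : Matrix (Fin n) (Fin n) K)⁻¹)
        ((g₄ : Matrix (Fin (n + 1)) (Fin (n + 1)) K) * w₄
          * (g₃ : Matrix (Fin (n + 1)) (Fin (n + 1)) K)⁻¹)).det
      = (g₄ : Matrix (Fin (n + 1)) (Fin (n + 1)) K).det ^ n * (sqBlockMatrix w₁ w₂ w₃ w₄).det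
        * ((g₂ : Matrix (Fin n) (Fin n) K).det⁻¹
          * ((g₁ : Matrix (Fin n) (Fin n) K).det⁻¹) ^ n) := by
  rw [sqBlockMatrix, funext₂ (sqBlock_act g₁ g₂ g₃ g₄ w₁ w₂ w₃ w₄),
    ← Matrix.blockDiagonal_mul_ofBlocks_mul_blockDiagonal (fun _ => (g₄ : Matrix _ _ K))
      (sqBlock w₁ w₂ w₃ w₄) (fun j : Fin (n + 1) => if (j : ℕ) = 0
        then (g₂ : Matrix (Fin n) (Fin n) K)⁻¹ else (g₁ : Matrix (Fin n) (Fin n) K)⁻¹),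
    Matrix.det_submatrix_blockDiagonal_mul_mul_blockDiagonal, ← sqBlockMatrix]
  simp [Fin.prod_univ_succ]

end BlockMatrix

theorem isSqSemiInvariant_det_sqBlockMatrix {n : ℕ} :
    IsSqSemiInvariant n 1 0 (-n) (sqBlockMatrix sqX₁ sqX₂ sqX₃ sqX₄ :
      Matrix _ _ (MvPolynomial (SqVars n n (n + 1) (n + 1)) ℂ)).det := by
  intro g₁ g₂ g₃ g₄ v₁ v₂ v₃ v₄
  simp only [sqEval_det, sqBlockMatrix_map, sqX₁_map_eval, sqX₂_map_eval, sqX₃_map_eval,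
    sqX₄_map_eval, det_sqBlockMatrix_act]
  simp only [zpow_neg, zpow_natCast, neg_neg, neg_zero, zpow_zero, zpow_one, mul_one, inv_pow]
  ring

theorem sqBlockMatrix_castSucc_succ_apply {n : ℕ} (r j : Fin (n + 1)) (i c : Fin n) :
    sqBlockMatrix (1 : Matrix (Fin n) (Fin n) ℂ)
        ((1 : Matrix (Fin (n + 1)) (Fin (n + 1)) ℂ).submatrix id Fin.castSucc)
        ((1 : Matrix (Fin (n + 1)) (Fin (n + 1)) ℂ).submatrix id Fin.succ) 1 (r, i) (j, c)
      = (if (j : ℕ) = i ∧ (r : ℕ) = c + 1 then 1 else 0)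
        + (if (j : ℕ) = i + 1 ∧ (r : ℕ) = c then 1 else 0) := by
  simp only [sqBlockMatrix, sqBlock, Matrix.ofBlocks, Matrix.submatrix_apply, Matrix.of_apply,
    Equiv.prodComm_apply, Prod.swap_prod_mk, id]
  split_ifs <;> simp [Matrix.one_apply, Fin.ext_iff] <;> omega

theorem det_sqBlockMatrix_castSucc_succ_ne_zero (n : ℕ) :
    (sqBlockMatrix (1 : Matrix (Fin n) (Fin n) ℂ)
      ((1 : Matrix (Fin (n + 1)) (Fin (n + 1)) ℂ).submatrix id Fin.castSucc)
      ((1 : Matrix (Fin (n + 1)) (Fin (n + 1)) ℂ).submatrix id Fin.succ) 1).det ≠ 0 := by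
  intro hdet
  obtain ⟨x, hx0, hx⟩ := Matrix.exists_mulVec_eq_zero_iff.mpr hdet
  set y : ℕ → ℕ → ℂ := fun j c => if h : j < n + 1 ∧ c < n then x (⟨j, h.1⟩, ⟨c, h.2⟩) else 0
  have hy (j c : ℕ) (hc : n ≤ c) : y j c = 0 := dif_neg (by omega)
  have hrow (i : Fin n) (r : Fin (n + 1)) :
      ∑ j ∈ Finset.range (n + 1), ∑ c ∈ Finset.range n,
        ((if j = i ∧ (r : ℕ) = c + 1 then y j c else 0)
          + if j = i + 1 ∧ (r : ℕ) = c then y j c else 0) = 0 := by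
    have hxy (j : Fin (n + 1)) (c : Fin n) : x (j, c) = y j c := by
      simp [y, Nat.lt_succ_iff.mp j.isLt]
    simp only [Finset.sum_range]
    simpa [Matrix.mulVec, dotProduct, Fintype.sum_prod_type, sqBlockMatrix_castSucc_succ_apply,
      hxy, add_mul, ite_mul] using congr_fun hx (r, i)
  have h₀ (i : ℕ) (hi : i < n) : y (i + 1) 0 = 0 := by
    have := hrow ⟨i, hi⟩ ⟨0, n.succ_pos⟩
    simp only [Nat.right_eq_add, Nat.add_eq_zero_iff, one_ne_zero, and_false, if_false, ite_and,
      zero_add, Finset.sum_ite_irrel, Finset.sum_ite_eq, Finset.mem_range, Finset.sum_const_zero,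
      Finset.sum_ite_eq', Order.lt_add_one_iff, Order.add_one_le_iff, ite_eq_right_iff] at this
    exact this hi (by omega)
  have h₁ (i : ℕ) (hi : i < n) (c : ℕ) (hc : c < n) : y i c + y (i + 1) (c + 1) = 0 := by
    have := hrow ⟨i, hi⟩ ⟨c + 1, by omega⟩
    simp only [Nat.add_right_cancel_iff, ite_and, Finset.sum_add_distrib, Finset.sum_ite_irrel,
      Finset.sum_ite_eq, Finset.mem_range, hc, if_true, Finset.sum_const_zero, Finset.sum_ite_eq',
      Order.lt_add_one_iff, Order.add_one_le_iff, hi] at this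
    rw [if_pos (by omega)] at this
    split_ifs at this
    · exact this
    · rw [hy (i + 1) (c + 1) (by omega)]
      simpa using this
  refine hx0 (funext fun ⟨j, c⟩ => ?_)
  simpa [y, Nat.lt_succ_iff.mp j.isLt] using eq_zero_of_shift_relations hy h₀ h₁ j j.is_le c

theorem exists_ne_zero_isSqSemiInvariant (n : ℕ) {σ₁ σ₂ σ₃ σ₄ : ℤ} (h₁₂ : 0 ≤ σ₁ + σ₂)
    (h₁₃₄ : 0 ≤ σ₁ + σ₃ + σ₄) (h₃ : 0 ≤ σ₃)
    (hsum : (n : ℤ) * σ₁ + n * σ₂ + (n + 1) * σ₃ + (n + 1) * σ₄ = 0) :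
    ∃ f : MvPolynomial (SqVars n n (n + 1) (n + 1)) ℂ, f ≠ 0 ∧ IsSqSemiInvariant σ₁ σ₂ σ₃ σ₄ f := by
  obtain ⟨c, hc⟩ : ((n : ℤ) + 1) ∣ σ₁ + σ₂ :=
    (show IsCoprime ((n : ℤ) + 1) n from ⟨1, -1, by ring⟩).dvd_of_dvd_mul_left
      ⟨-(σ₃ + σ₄), by linarith⟩
  have hc₀ : 0 ≤ c := nonneg_of_mul_nonneg_right (hc ▸ h₁₂) (by positivity)
  have h₃₄ : σ₃ + σ₄ = -(n * c) := by
    have : ((n : ℤ) + 1) * (σ₃ + σ₄ + n * c) = 0 := by linear_combination hsum - n * hc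
    linarith [(mul_eq_zero.mp this).resolve_left (by positivity)]
  obtain ⟨a, rfl⟩ := Int.eq_ofNat_of_zero_le h₃
  obtain ⟨b, hb⟩ := Int.eq_ofNat_of_zero_le h₁₃₄
  obtain ⟨k, rfl⟩ := Int.eq_ofNat_of_zero_le hc₀
  refine ⟨(sqX₄ : Matrix (Fin (n + 1)) (Fin (n + 1)) _).det ^ a
    * (sqX₁ : Matrix (Fin n) (Fin n) _).det ^ b * (sqBlockMatrix sqX₁ sqX₂ sqX₃ sqX₄).det ^ k,
    ne_zero_of_sqEval_ne_zero (v₁ := 1)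
      (v₂ := (1 : Matrix (Fin (n + 1)) (Fin (n + 1)) ℂ).submatrix id Fin.castSucc)
      (v₃ := (1 : Matrix (Fin (n + 1)) (Fin (n + 1)) ℂ).submatrix id Fin.succ) (v₄ := 1) ?_, ?_⟩
  · simp only [sqEval_mul, sqEval_pow, sqEval_det, sqBlockMatrix_map, sqX₁_map_eval,
      sqX₂_map_eval, sqX₃_map_eval, sqX₄_map_eval]
    simp [det_sqBlockMatrix_castSucc_succ_ne_zero]
  · convert ((isSqSemiInvariant_det_sqX₄.pow a).mul (isSqSemiInvariant_det_sqX₁.pow b)).mul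
      (isSqSemiInvariant_det_sqBlockMatrix.pow k) using 1 <;> linarith

/-- for the square quiver with dimension vector `(n, n, n+1, n+1)`, a weight
`(σ₁, σ₂, σ₃, σ₄)` admits a nonzero semi-invariant iff `σ₁ + σ₂ ≥ 0`, `σ₁ + σ₃ + σ₄ ≥ 0`,
`σ₃ ≥ 0`, and `n σ₁ + n σ₂ + (n+1) σ₃ + (n+1) σ₄ = 0`. -/
theorem sq_semiinvariant_iff_nnn1n1 (n : ℕ) (hn : 1 ≤ n) (σ₁ σ₂ σ₃ σ₄ : ℤ) :
    (∃ f : MvPolynomial (SqVars n n (n + 1) (n + 1)) ℂ,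
        f ≠ 0 ∧ IsSqSemiInvariant σ₁ σ₂ σ₃ σ₄ f)
      ↔ (0 ≤ σ₁ + σ₂ ∧ 0 ≤ σ₁ + σ₃ + σ₄ ∧ 0 ≤ σ₃ ∧
          (n : ℤ) * σ₁ + (n : ℤ) * σ₂ + ((n : ℤ) + 1) * σ₃ + ((n : ℤ) + 1) * σ₄ = 0) := by
  constructor
  · rintro ⟨f, hf0, hf⟩
    exact ⟨hf.σ₁_add_σ₂_nonneg hf0 hn le_rfl,
      hf.σ₁_add_σ₃_add_σ₄_nonneg hf0 hn n.succ_pos n.lt_succ_self,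
      hf.σ₃_nonneg hf0 n.lt_succ_self, by simpa using hf.sum_dim_mul_weight_eq_zero hf0⟩
  · rintro ⟨h₁₂, h₁₃₄, h₃, hsum⟩
    exact exists_ne_zero_isSqSemiInvariant n h₁₂ h₁₃₄ h₃ hsum
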